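/- arXiv:1710.04787 — 2 statements merged into one kernel-verified Lean document; each statement's English description precedes it below -/
import Mathlib

section
/- Let H be a completely metrizable topological group, G a group with |G| < 2^{ℵ₀}, and φ : H → G a group homomorphism. Then there exists an open neighborhood V of 1_H such that for every neighborhood V' of 1_H with V' ⊆ V, φ(V') = φ(V). -/
/-!
If the images do not stabilise, every neighbourhood `U` of `1` contains some `g` with
`φ g ∉ φ '' V` for a smaller neighbourhood `V`. Iterating, we choose `g₀, g₁, …` and
neighbourhoods `U₀ ⊇ U₁ ⊇ …` shrinking fast enough that for every `ε : ℕ → Bool` the ordered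
products of the `gₙ` with `ε n = true` converge in the complete metric; since at each stage there
are only finitely many partial products, this needs no invariance of the metric. If `ε` and `ε'`
first differ at `n`, the two limits are `q * gₙ * c` and `q * c'` with `c, c'` in
`closure (Uₙ₊₁ * Uₙ₊₁)`, and `φ gₙ` was chosen outside `φ` of the quotients of this set. Hence
`ε ↦ φ (lim …)` injects the Cantor space into `G`.
-/

open Set Filter Topology Pointwise Function
open scoped Cardinal

lemma injective_of_ne_of_first_difference {α : Type*} {f : (ℕ → Bool) → α}
    (hf : ∀ ε ε' n, (∀ k < n, ε k = ε' k) → ε n = false → ε' n = true → f ε ≠ f ε') :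
    Injective f := by
  intro ε ε' hεε'
  rcases lt_trichotomy (toLex ε) (toLex ε') with ⟨n, hagree, hlt⟩ | hlex | ⟨n, hagree, hlt⟩
  · simp only [Bool.lt_iff] at hlt
    exact absurd hεε' (hf ε ε' n hagree hlt.1 hlt.2)
  · exact hlex
  · simp only [Bool.lt_iff] at hlt
    exact absurd hεε'.symm (hf ε' ε n hagree hlt.1 hlt.2)

lemma two_pow_aleph0_le_mk_of_injective {G : Type*} {f : (ℕ → Bool) → G} (hf : Injective f) :
    2 ^ ℵ₀ ≤ #G := by
  simpa using Cardinal.lift_mk_le_lift_mk_of_injective hf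

lemma eventually_smallSets_closure_mul_self_subset {H : Type*} [Group H] [TopologicalSpace H]
    [IsTopologicalGroup H] {A : Set H} (hA : A ∈ 𝓝 1) :
    ∀ᶠ W in (𝓝 (1 : H)).smallSets, closure (W * W) ⊆ A := by
  obtain ⟨C, hC, hCclosed, hCA⟩ := exists_mem_nhds_isClosed_subset hA
  obtain ⟨V, hVopen, hV1, hVC⟩ := exists_open_nhds_one_mul_subset hC
  exact eventually_smallSets.2 ⟨V, hVopen.mem_nhds hV1, fun W hW =>
    (closure_minimal ((mul_subset_mul hW hW).trans hVC) hCclosed).trans hCA⟩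

section ProductScheme

variable {H : Type*} [Group H]

def partialProd (h : ℕ → H) (ε : ℕ → Bool) : ℕ → H
  | 0 => 1
  | n + 1 => partialProd h ε n * if ε n then h n else 1

lemma partialProd_congr {h : ℕ → H} {ε ε' : ℕ → Bool} {n : ℕ} (hε : ∀ k < n, ε k = ε' k) :
    partialProd h ε n = partialProd h ε' n := by
  induction n with
  | zero => rfl
  | succ n ih => simp only [partialProd, ih fun k hk => hε k (by omega), hε n n.lt_succ_self]

structure IsProductScheme (U : ℕ → Set H) (h : ℕ → H) : Prop where
  one_mem : ∀ n, (1 : H) ∈ U n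
  mul_self_subset : ∀ n, U (n + 1) * U (n + 1) ⊆ U n
  mem : ∀ n, h n ∈ U n

namespace IsProductScheme

variable {U : ℕ → Set H} {h : ℕ → H}

lemma partialProd_add_mem (hS : IsProductScheme U h) (ε : ℕ → Bool) (m k : ℕ) :
    partialProd h ε (m + k) ∈ partialProd h ε m • (U m * U m) := by
  induction k generalizing m with
  | zero => exact ⟨1 * 1, mul_mem_mul (hS.one_mem m) (hS.one_mem m), by simp⟩
  | succ k ih =>
    obtain ⟨y, hy, hyeq⟩ := ih (m + 1)
    refine ⟨(if ε m then h m else 1) * y, mul_mem_mul ?_ (hS.mul_self_subset m hy), ?_⟩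
    · split_ifs
      exacts [hS.mem m, hS.one_mem m]
    · rw [show m + (k + 1) = m + 1 + k by omega, ← hyeq]
      simp only [partialProd, smul_eq_mul, mul_assoc]

lemma mem_smul_closure_of_tendsto [TopologicalSpace H] [ContinuousMul H]
    (hS : IsProductScheme U h) {ε : ℕ → Bool} {x : H}
    (hx : Tendsto (partialProd h ε) atTop (𝓝 x)) (m : ℕ) :
    x ∈ partialProd h ε m • closure (U m * U m) := by
  rw [← closure_smul]
  refine mem_closure_of_tendsto hx ((eventually_ge_atTop m).mono fun k hk => ?_)
  simpa [Nat.add_sub_cancel' hk] using hS.partialProd_add_mem ε m (k - m)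

lemma cauchySeq_partialProd [PseudoMetricSpace H] (hS : IsProductScheme U h) {ε : ℕ → Bool}
    (hdist : ∀ n, ∀ x ∈ U (n + 1) * U (n + 1),
      dist (partialProd h ε (n + 1) * x) (partialProd h ε (n + 1)) < (1 / 2) ^ n) :
    CauchySeq (partialProd h ε) := by
  rw [Metric.cauchySeq_iff']
  intro δ hδ
  obtain ⟨N, hN⟩ := exists_pow_lt_of_lt_one hδ (by norm_num : (1 / 2 : ℝ) < 1)
  refine ⟨N + 1, fun n hn => ?_⟩
  obtain ⟨y, hy, hyeq⟩ := hS.partialProd_add_mem ε (N + 1) (n - (N + 1))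
  rw [Nat.add_sub_cancel' hn] at hyeq
  rw [← hyeq]
  exact (hdist N y hy).trans hN

lemma map_ne_of_first_difference [TopologicalSpace H] [ContinuousMul H] {G : Type*} [Group G]
    (hS : IsProductScheme U h) (φ : H →* G) {n : ℕ}
    (hsep : φ (h n) ∉ φ '' (closure (U (n + 1) * U (n + 1)) / closure (U (n + 1) * U (n + 1))))
    {ε ε' : ℕ → Bool} (hagree : ∀ k < n, ε k = ε' k) (hε : ε n = false) (hε' : ε' n = true)
    {x x' : H} (hx : Tendsto (partialProd h ε) atTop (𝓝 x))
    (hx' : Tendsto (partialProd h ε') atTop (𝓝 x')) :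
    φ x ≠ φ x' := by
  obtain ⟨c, hc, rfl⟩ := hS.mem_smul_closure_of_tendsto hx (n + 1)
  obtain ⟨c', hc', rfl⟩ := hS.mem_smul_closure_of_tendsto hx' (n + 1)
  intro hφ
  simp only [partialProd, hε, hε', partialProd_congr hagree, Bool.false_eq_true, if_false,
    if_true, smul_eq_mul, map_mul, mul_one, mul_assoc, mul_right_inj] at hφ
  exact hsep ⟨c / c', div_mem_div hc hc', by rw [map_div, hφ, mul_div_cancel_right]⟩

end IsProductScheme

end ProductScheme

section Construction

variable {H : Type*} [Group H] [PseudoMetricSpace H] [IsTopologicalGroup H] {G : Type*} [Group G]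

lemma exists_mem_and_nhds_one_separating (φ : H →* G)
    (hφ : ∀ U ∈ 𝓝 (1 : H), ∃ V ∈ 𝓝 (1 : H), ¬ φ '' U ⊆ φ '' V)
    (n : ℕ) (U S : Set H) (hU : U ∈ 𝓝 1) (hS : S.Finite) :
    ∃ g ∈ U, ∃ W ∈ 𝓝 (1 : H), W * W ⊆ U ∧
      (∀ p ∈ S ∪ S * {g}, ∀ x ∈ W * W, dist (p * x) p < (1 / 2) ^ n) ∧
      φ g ∉ φ '' (closure (W * W) / closure (W * W)) := by
  obtain ⟨V, hV, hUV⟩ := hφ U hU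
  obtain ⟨_, ⟨g, hgU, rfl⟩, hgV⟩ := not_subset.1 hUV
  obtain ⟨B, hB, hBV⟩ := exists_nhds_split_inv hV
  have hnear : ∀ᶠ x in 𝓝 (1 : H), ∀ p ∈ S ∪ S * {g}, dist (p * x) p < (1 / 2) ^ n := by
    refine (hS.union (hS.mul (finite_singleton g))).eventually_all.2 fun p _ => ?_
    have hp : Tendsto (p * ·) (𝓝 1) (𝓝 p) := by simpa using (continuous_const_mul p).tendsto 1
    exact hp (Metric.ball_mem_nhds p (by positivity))
  obtain ⟨W, hW, hWsmall⟩ := eventually_smallSets.1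
    (eventually_smallSets_closure_mul_self_subset (inter_mem hU (inter_mem hnear hB)))
  have hclosure := hWsmall W Subset.rfl
  have hWW := subset_closure.trans hclosure
  refine ⟨g, hgU, W, hW, fun x hx => (hWW hx).1, fun p hp x hx => (hWW hx).2.1 p hp, ?_⟩
  rintro ⟨_, ⟨c, hc, c', hc', rfl⟩, hgc⟩
  exact hgV ⟨c / c', hBV c (hclosure hc).2.2 c' (hclosure hc').2.2, hgc⟩

lemma exists_isProductScheme (φ : H →* G)
    (hφ : ∀ U ∈ 𝓝 (1 : H), ∃ V ∈ 𝓝 (1 : H), ¬ φ '' U ⊆ φ '' V) :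
    ∃ (U : ℕ → Set H) (h : ℕ → H), IsProductScheme U h ∧
      (∀ ε n, ∀ x ∈ U (n + 1) * U (n + 1),
        dist (partialProd h ε (n + 1) * x) (partialProd h ε (n + 1)) < (1 / 2) ^ n) ∧
      ∀ n, φ (h n) ∉ φ '' (closure (U (n + 1) * U (n + 1)) / closure (U (n + 1) * U (n + 1))) := by
  choose! g hgU W hW hWU hdist hsep using exists_mem_and_nhds_one_separating φ hφ
  -- the state at stage `n` is the current neighbourhood and the set of all partial products
  obtain ⟨st, hst0, hst⟩ : ∃ st : ℕ → Set H × Set H, st 0 = (Set.univ, {1}) ∧ ∀ n,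
      st (n + 1) = (W n (st n).1 (st n).2, (st n).2 ∪ (st n).2 * {g n (st n).1 (st n).2}) :=
    ⟨fun n => Nat.rec (Set.univ, {1}) (fun n p => (W n p.1 p.2, p.2 ∪ p.2 * {g n p.1 p.2})) n,
      rfl, fun _ => rfl⟩
  have hinv : ∀ n, (st n).1 ∈ 𝓝 1 ∧ (st n).2.Finite := by
    intro n
    induction n with
    | zero => simp [hst0]
    | succ n ih =>
      rw [hst]
      exact ⟨hW n _ _ ih.1 ih.2, ih.2.union (ih.2.mul (finite_singleton _))⟩
  set h : ℕ → H := fun n => g n (st n).1 (st n).2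
  have hprod : ∀ ε n, partialProd h ε n ∈ (st n).2 := by
    intro ε n
    induction n with
    | zero => simp [hst0, partialProd]
    | succ n ih =>
      rw [hst]
      simp only [partialProd]
      split_ifs
      exacts [Or.inr (mul_mem_mul ih rfl), Or.inl (by simpa using ih)]
  refine ⟨fun n => (st n).1, h, ⟨fun n => mem_of_mem_nhds (hinv n).1, fun n => ?_,
    fun n => hgU n _ _ (hinv n).1 (hinv n).2⟩, fun ε n => ?_, fun n => ?_⟩
  · rw [hst]
    exact hWU n _ _ (hinv n).1 (hinv n).2
  · have := hprod ε (n + 1)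
    simp only [hst] at this ⊢
    exact hdist n _ _ (hinv n).1 (hinv n).2 _ this
  · simp only [hst]
    exact hsep n _ _ (hinv n).1 (hinv n).2

theorem two_pow_aleph0_le_mk_of_unstable_images [CompleteSpace H] (φ : H →* G)
    (hφ : ∀ U ∈ 𝓝 (1 : H), ∃ V ∈ 𝓝 (1 : H), ¬ φ '' U ⊆ φ '' V) :
    2 ^ ℵ₀ ≤ #G := by
  obtain ⟨U, h, hS, hdist, hsep⟩ := exists_isProductScheme φ hφ
  choose x hx using fun ε => cauchySeq_tendsto_of_complete (hS.cauchySeq_partialProd (hdist ε))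
  refine two_pow_aleph0_le_mk_of_injective (f := fun ε => φ (x ε)) ?_
  exact injective_of_ne_of_first_difference fun ε ε' n hagree hε hε' =>
    hS.map_ne_of_first_difference φ (hsep n) hagree hε hε' (hx ε) (hx ε')

end Construction

/-- If `H` is a completely metrizable topological group, `G` a group of cardinality
`< 2 ^ ℵ₀` and `φ : H →* G` a (not necessarily continuous) homomorphism, then there
is an open neighborhood `V` of `1` such that `φ '' V' = φ '' V` for every
neighborhood `V' ⊆ V` of `1`. -/
theorem exists_stable_image_nhds_of_completelyMetrizable
    {H : Type*} [Group H] [tH : TopologicalSpace H] [IsTopologicalGroup H]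
    (hH : ∃ mH : MetricSpace H,
      mH.toUniformSpace.toTopologicalSpace = tH ∧ @CompleteSpace H mH.toUniformSpace)
    {G : Type*} [Group G] (hcard : Cardinal.mk G < 2 ^ Cardinal.aleph0)
    (φ : H →* G) :
    ∃ V : Set H, IsOpen V ∧ (1 : H) ∈ V ∧
      ∀ V' ∈ nhds (1 : H), V' ⊆ V → φ '' V' = φ '' V := by
  obtain ⟨m, rfl, hcomplete⟩ := hH
  by_contra! hunstable
  refine (two_pow_aleph0_le_mk_of_unstable_images φ fun U hU => ?_).not_gt hcard
  obtain ⟨V, hV, hVU, hne⟩ :=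
    hunstable (interior U) isOpen_interior (mem_interior_iff_mem_nhds.2 hU)
  exact ⟨V, hV, fun hUV => hne ((image_mono hVU).antisymm ((image_mono interior_subset).trans hUV))⟩
end

section
/- If G is a group with a limiting sequence pair, then G is lcH-slender: every group homomorphism from a locally compact Hausdorff topological group to G has open kernel. -/
universe u

def IsLimitingSequencePair {G : Type*} [Group G] (F : ℕ → Set G) (k : ℕ → ℕ) : Prop :=
  Monotone F ∧
  (∀ (n : ℕ) (g : G), ∃ m : ℕ, (fun x => g * x) '' F n ⊆ F m) ∧
  (∀ n : ℕ, {g : G | g ^ k n ∈ F n} = {1}) ∧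
  (∀ m n : ℕ, m ≤ n → {g : G | g ^ k m ∈ F n} ⊆ F n)

/-- A group `G` is lcH-slender if every group homomorphism from a locally compact
Hausdorff topological group to `G` has open kernel. -/
def IsLCHSlender (G : Type*) [Group G] : Prop :=
  ∀ (H : Type u) [Group H] [TopologicalSpace H] [IsTopologicalGroup H]
    [LocallyCompactSpace H] [T2Space H],
    ∀ φ : H →* G, IsOpen ((φ : H → G) ⁻¹' {1})

/-!
Suppose the kernel of `φ : H → G` is not open. Choose `x n → 1` outside the kernel and indices
`c n` so that the truncations of the nested product `x 0 (x 1 (x 2 ⋯) ^ k (c 1)) ^ k (c 0)` stay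
in a compact set; compactness then gives `y` with `y n = x n * y (n + 1) ^ k (c n)` for all `n`.
In `G` this reads `g n = a n * g (n + 1) ^ k (c n)` with `a n ≠ 1`, and no `g n` is `1`, since
otherwise `a n⁻¹ = g (n + 1) ^ k (c n) ∈ F (c n)` would force `g (n + 1) = 1` and `a n = 1`.
Follow `g 0 ∈ F N` through the system, translating by (1) into `F (M (n + 1))`: by (3) this
gives `g (n + 1) ∈ F (M (n + 1))` while `c n < M (n + 1)`, and by (2) it gives `g (n + 1) = 1`
once `c n ≥ M (n + 1)`. Since `N` depends on the limit, each `c n` is taken larger than the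
bounds `M (n + 1)` of all starting indices `N ≤ n`.
-/

open Set Filter Topology Pointwise

theorem exists_seq_eq_apply_succ_of_mapsTo {X : Type*} [TopologicalSpace X] [T2Space X]
    {K : Set X} (hK : IsCompact K) {L : ℕ → Set X} (hLK : ∀ n, L n ⊆ K)
    (hL : ∀ n, (L n).Nonempty) {f : ℕ → X → X} (hf : ∀ n, Continuous (f n))
    (hfL : ∀ n, MapsTo (f n) (L (n + 1)) (L n)) :
    ∃ y : ℕ → X, ∀ n, y n = f n (y (n + 1)) := by
  choose z hz using hL
  -- `t j n = f n (f (n + 1) (⋯ (f (n + j - 1) (z (n + j)))))`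
  let t : ℕ → ℕ → X := fun j => Nat.rec z (fun _ t n => f n (t (n + 1))) j
  have ht : ∀ j n, t j n ∈ L n := by
    intro j
    induction j with
    | zero => exact hz
    | succ j ih => exact fun n => hfL n (ih (n + 1))
  let C : ℕ → Set (ℕ → X) := fun j =>
    univ.pi (fun _ => K) ∩ {y | ∀ n < j, y n = f n (y (n + 1))}
  have hC : (⋂ j, C j).Nonempty := by
    refine IsCompact.nonempty_iInter_of_sequence_nonempty_isCompact_isClosed C
      (fun j => inter_subset_inter_right _ fun y hy n hn => hy n (Nat.lt_succ_of_lt hn))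
      (fun j => ⟨fun n => t (j - n) n, fun n _ => hLK n (ht _ n), fun n hn => ?_⟩)
      ((isCompact_univ_pi fun _ => hK).inter_right ?_) fun j => ?_
    · obtain ⟨i, rfl⟩ := Nat.exists_eq_add_of_lt hn
      simp only [show n + i + 1 - n = i + 1 by omega, show n + i + 1 - (n + 1) = i by omega]
      rfl
    · simp only [Nat.not_lt_zero, IsEmpty.forall_iff, implies_true, ofPred_true, isClosed_univ]
    · refine (isClosed_set_pi fun _ _ => hK.isClosed).inter ?_
      simp only [ofPred_forall]
      exact isClosed_biInter fun n _ =>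
        isClosed_eq (continuous_apply n) ((hf n).comp (continuous_apply (n + 1)))
  obtain ⟨y, hy⟩ := hC
  exact ⟨y, fun n => (mem_iInter.1 hy (n + 1)).2 n n.lt_succ_self⟩

theorem exists_nhds_one_mul_subset_inter_preimage_pow {H : Type*} [Group H] [TopologicalSpace H]
    [IsTopologicalGroup H] (m : ℕ) {V : Set H} (hV : V ∈ 𝓝 (1 : H)) :
    ∃ W ∈ 𝓝 (1 : H), W * W ⊆ V ∩ (· ^ m) ⁻¹' V := by
  have hpow : (· ^ m) ⁻¹' V ∈ 𝓝 (1 : H) :=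
    (continuous_pow m).continuousAt.preimage_mem_nhds (by rwa [one_pow])
  obtain ⟨W, hWo, hW1, hWW⟩ := exists_open_nhds_one_mul_subset (inter_mem hV hpow)
  exact ⟨W, hWo.mem_nhds hW1, hWW⟩

theorem exists_seq_mapsTo_mul_pow {H : Type*} [Group H] [TopologicalSpace H]
    [IsTopologicalGroup H] {p : H → Prop} (hp : ∀ U ∈ 𝓝 (1 : H), ∃ x ∈ U, p x)
    (k : ℕ → ℕ) (τ : H → ℕ → ℕ) {K : Set H} (hK : K ∈ 𝓝 (1 : H)) :
    ∃ (x : ℕ → H) (c : ℕ → ℕ) (L : ℕ → Set H) (b : ℕ → ℕ → ℕ),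
      (∀ n, p (x n)) ∧ (∀ n, (L n).Nonempty) ∧ (∀ n, L n ⊆ K) ∧
      (∀ n, MapsTo (fun u => x n * u ^ k (c n)) (L (n + 1)) (L n)) ∧
      (∀ N, b 0 N = N) ∧ (∀ j N, b (j + 1) N = τ (x j) (b j N)) ∧
      ∀ n, ∀ N ≤ n, b (n + 1) N ≤ c n := by
  obtain ⟨V₀, hV₀o, hV₀1, hV₀K⟩ := exists_open_nhds_one_mul_subset hK
  choose ξ hξV hξp using hp
  choose W hW hWV using fun (m : ℕ) (V : {V : Set H // V ∈ 𝓝 1}) =>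
    exists_nhds_one_mul_subset_inter_preimage_pow m V.2
  -- The state after step `n` is the neighbourhood `V n` together with `N ↦ b n N`.
  let next (n : ℕ) (s : {V : Set H // V ∈ 𝓝 1} × (ℕ → ℕ)) :
      {V : Set H // V ∈ 𝓝 1} × (ℕ → ℕ) :=
    let b' := fun N => τ (ξ s.1 s.1.2) (s.2 N)
    (⟨W (k ((Finset.range (n + 1)).sup b')) s.1, hW _ _⟩, b')
  let s : ℕ → {V : Set H // V ∈ 𝓝 1} × (ℕ → ℕ) :=
    fun n => Nat.rec (⟨V₀, hV₀o.mem_nhds hV₀1⟩, id) next n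
  let V : ℕ → Set H := fun n => (s n).1
  have hV1 : ∀ n, (1 : H) ∈ V n := fun n => mem_of_mem_nhds (s n).1.2
  have hVsucc : ∀ n, V (n + 1) * V (n + 1) ⊆ V n := fun n => (hWV _ _).trans inter_subset_left
  have hVV₀ : ∀ n, V n ⊆ V₀ := by
    intro n
    induction n with
    | zero => exact subset_rfl
    | succ n ih => exact (subset_mul_left _ (hV1 (n + 1))).trans ((hVsucc n).trans ih)
  refine ⟨fun n => ξ (s n).1 (s n).1.2, fun n => (Finset.range (n + 1)).sup (s (n + 1)).2,
    fun n => V n * V n, fun n => (s n).2, fun n => hξp _ _,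
    fun n => ⟨_, mul_mem_mul (hV1 n) (hV1 n)⟩,
    fun n => (mul_subset_mul (hVV₀ n) (hVV₀ n)).trans hV₀K, fun n u hu => ?_,
    fun _ => rfl, fun _ _ => rfl,
    fun n N hN => Finset.le_sup (Finset.mem_range.2 (Nat.lt_succ_of_le hN))⟩
  exact mul_mem_mul (hξV _ _) (hWV _ _ hu).2

namespace IsLimitingSequencePair

variable {G : Type*} [Group G] {F : ℕ → Set G} {k : ℕ → ℕ}
  (hF : IsLimitingSequencePair F k)
include hF

theorem eq_one_of_pow_mem {g : G} {n : ℕ} (h : g ^ k n ∈ F n) : g = 1 := by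
  simpa only [hF.2.2.1 n, mem_singleton_iff] using (show g ∈ {g : G | g ^ k n ∈ F n} from h)

theorem one_mem (n : ℕ) : (1 : G) ∈ F n := by
  simpa using (hF.2.2.1 n).symm.subset (mem_singleton (1 : G))

theorem exists_mul_mem (g : G) (n : ℕ) : ∃ m, ∀ y ∈ F n, g * y ∈ F m :=
  (hF.2.1 n g).imp fun _ hm y hy => hm ⟨y, hy, rfl⟩

theorem exists_mem (g : G) : ∃ m, g ∈ F m :=
  (hF.exists_mul_mem g 0).imp fun _ hm => by simpa using hm 1 (hF.one_mem 0)

section Chain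

variable {a g : ℕ → G} {c : ℕ → ℕ} (hg : ∀ n, g n = a n * g (n + 1) ^ k (c n))
include hg

theorem chain_ne_one {n : ℕ} (ha : a n ≠ 1) (hac : (a n)⁻¹ ∈ F (c n)) : g n ≠ 1 := by
  intro h1
  have hpow : g (n + 1) ^ k (c n) = (a n)⁻¹ :=
    eq_inv_of_mul_eq_one_right ((hg n).symm.trans h1)
  have hg1 : g (n + 1) = 1 := hF.eq_one_of_pow_mem (hpow ▸ hac)
  exact ha (inv_eq_one.1 (by rw [← hpow, hg1, one_pow]))

theorem chain_step {n m m' : ℕ} (hgn : g n ∈ F m)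
    (hmul : ∀ y ∈ F m, (a n)⁻¹ * y ∈ F m') (hne : g (n + 1) ≠ 1) :
    c n < m' ∧ g (n + 1) ∈ F m' := by
  have hpow : g (n + 1) ^ k (c n) ∈ F m' := by
    simpa only [hg n, inv_mul_cancel_left] using hmul _ hgn
  by_cases hm' : m' ≤ c n
  · exact absurd (hF.eq_one_of_pow_mem (hF.1 hm' hpow)) hne
  · exact ⟨not_le.1 hm', hF.2.2.2 _ _ (not_le.1 hm').le hpow⟩

theorem chain_lt {M : ℕ → ℕ} (h0 : g 0 ∈ F (M 0))
    (hM : ∀ j, ∀ y ∈ F (M j), (a j)⁻¹ * y ∈ F (M (j + 1))) (hne : ∀ n, g n ≠ 1)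
    (j : ℕ) : c j < M (j + 1) := by
  have hmem : ∀ j, g j ∈ F (M j) := by
    intro j
    induction j with
    | zero => exact h0
    | succ j ih => exact (hF.chain_step hg ih (hM j) (hne _)).2
  exact (hF.chain_step hg (hmem j) (hM j) (hne _)).1

end Chain

end IsLimitingSequencePair

/-- A group with a limiting sequence pair is lcH-slender. -/
theorem isLCHSlender_of_limitingSequencePair
    {G : Type*} [Group G]
    (h : ∃ (F : ℕ → Set G) (k : ℕ → ℕ), IsLimitingSequencePair F k) :
    IsLCHSlender.{u} G := by
  obtain ⟨F, k, hF⟩ := h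
  intro H _ _ _ _ _ φ
  rw [← MonoidHom.coe_ker]
  by_contra hopen
  have hp : ∀ U ∈ 𝓝 (1 : H), ∃ x ∈ U, φ x ≠ 1 := fun U hU => by
    by_contra! hU1
    exact hopen (φ.ker.isOpen_of_mem_nhds (mem_of_superset hU hU1))
  choose τ hτ using hF.exists_mul_mem
  obtain ⟨K, hK, hK1⟩ := exists_compact_mem_nhds (1 : H)
  obtain ⟨x, c, L, b, hx, hL, hLK, hmaps, hb0, hbs, hbc⟩ :=
    exists_seq_mapsTo_mul_pow hp k (fun h => τ (φ h)⁻¹) hK1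
  obtain ⟨y, hy⟩ := exists_seq_eq_apply_succ_of_mapsTo (f := fun n u => x n * u ^ k (c n))
    hK hLK hL (fun n => continuous_const.mul (continuous_pow _)) hmaps
  have hg : ∀ n, φ (y n) = φ (x n) * φ (y (n + 1)) ^ k (c n) := fun n => by
    rw [hy n, map_mul, map_pow]
  have hmul : ∀ j N, ∀ z ∈ F (b j N), (φ (x j))⁻¹ * z ∈ F (b (j + 1) N) := fun j N => by
    rw [hbs]; exact hτ _ _
  have hxc : ∀ n, (φ (x n))⁻¹ ∈ F (c n) := fun n =>
    hF.1 (hbc n 0 n.zero_le) (by simpa using hmul n 0 1 (hF.one_mem _))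
  obtain ⟨N, hN⟩ := hF.exists_mem (φ (y 0))
  have hlt := hF.chain_lt hg (M := fun j => b j N) (by rwa [hb0]) (fun j => hmul j N)
    (fun n => hF.chain_ne_one hg (hx n) (hxc n)) N
  exact absurd (hbc N N le_rfl) (not_le.2 hlt)
end
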